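/- arXiv:1010.6081 — 9 statements merged into one kernel-verified Lean document; each statement's English description precedes it below -/
import Mathlib

section
/- Let M be an n×n matrix over a commutative ring with n ≥ 2, let E = det M, let D be the minor obtained by deleting the first two rows and first two columns, and let M_{ij} denote the minor obtained by deleting row i and column j. Then E·D = M_{11}·M_{22} − M_{12}·M_{21}. -/
/-!
For a block matrix `M` with adjugate `A`, multiplying `M` by `[A₁₁ 0; A₂₁ 1]` gives
`[det M • 1, M₁₂; 0, M₂₂]`, because the first block column of `M * A` is `det M` times that of
the identity. Hence `det M * det A₁₁ = (det M) ^ k * det M₂₂`, where `k` is the size of the first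
block. Cancelling `det M` is legitimate for the generic matrix over `ℤ[Xᵢⱼ]`, and specialising
gives Jacobi's identity `det A₁₁ = (det M) ^ (k - 1) * det M₂₂` over any commutative ring.
With `k = 2` the entries of `A₁₁` are the signed minors `M_{ji}`, so `det A₁₁` is the
right-hand side of the Desnanot–Jacobi identity.
-/

open Matrix

namespace Matrix

variable {m n R : Type*} [Fintype m] [Fintype n] [DecidableEq m] [DecidableEq n] [CommRing R]

theorem det_mul_det_toBlocks₁₁_adjugate (M : Matrix (m ⊕ n) (m ⊕ n) R) :
    M.det * (toBlocks₁₁ M.adjugate).det = M.det ^ Fintype.card m * (toBlocks₂₂ M).det := by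
  set d := M.det
  set A := M.adjugate
  have hcol : toBlocks₁₁ M * toBlocks₁₁ A + toBlocks₁₂ M * toBlocks₂₁ A = d • 1 ∧
      toBlocks₂₁ M * toBlocks₁₁ A + toBlocks₂₂ M * toBlocks₂₁ A = 0 := by
    have h : M * A = fromBlocks (d • 1) 0 0 (d • 1) := by
      rw [mul_adjugate, ← fromBlocks_one, fromBlocks_smul, smul_zero, smul_zero]
    rw [← fromBlocks_toBlocks M, ← fromBlocks_toBlocks A, fromBlocks_multiply,
      fromBlocks_inj] at h
    exact ⟨h.1, h.2.2.1⟩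
  calc d * (toBlocks₁₁ A).det = (M * fromBlocks (toBlocks₁₁ A) 0 (toBlocks₂₁ A) 1).det := by
        rw [det_mul, det_fromBlocks_zero₁₂, det_one, mul_one]
    _ = (fromBlocks (d • 1) (toBlocks₁₂ M) 0 (toBlocks₂₂ M)).det := by
        conv_lhs => rw [← fromBlocks_toBlocks M]
        rw [fromBlocks_multiply, hcol.1, hcol.2]
        simp
    _ = d ^ Fintype.card m * (toBlocks₂₂ M).det := by
        rw [det_fromBlocks_zero₂₁, det_smul, det_one, mul_one]

theorem det_toBlocks₁₁_adjugate_of_det_ne_zero [IsDomain R] [Nonempty m]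
    (M : Matrix (m ⊕ n) (m ⊕ n) R) (hM : M.det ≠ 0) :
    (toBlocks₁₁ M.adjugate).det = M.det ^ (Fintype.card m - 1) * (toBlocks₂₂ M).det := by
  refine mul_left_cancel₀ hM ?_
  rw [det_mul_det_toBlocks₁₁_adjugate, ← mul_assoc, ← pow_succ',
    Nat.sub_add_cancel Fintype.card_pos]

theorem det_toBlocks₁₁_adjugate [Nonempty m] (M : Matrix (m ⊕ n) (m ⊕ n) R) :
    (toBlocks₁₁ M.adjugate).det = M.det ^ (Fintype.card m - 1) * (toBlocks₂₂ M).det := by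
  have h := congrArg (MvPolynomial.aeval fun p : (m ⊕ n) × (m ⊕ n) => M p.1 p.2)
    (det_toBlocks₁₁_adjugate_of_det_ne_zero (mvPolynomialX (m ⊕ n) (m ⊕ n) ℤ)
      (det_mvPolynomialX_ne_zero (m ⊕ n) ℤ))
  rw [map_mul, map_pow, AlgHom.map_det, AlgHom.map_det, AlgHom.map_det] at h
  rw [← mvPolynomialX_mapMatrix_aeval ℤ M, ← AlgHom.map_adjugate]
  exact h

end Matrix

/-- Desnanot–Jacobi identity specialized to the first two rows and columns. -/
theorem desnanot_jacobi {R : Type*} [CommRing R] (n : ℕ)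
    (M : Matrix (Fin (n + 2)) (Fin (n + 2)) R) :
    M.det *
        (M.submatrix (fun i : Fin n => i.succ.succ) (fun j : Fin n => j.succ.succ)).det =
      (M.submatrix (Fin.succAbove 0) (Fin.succAbove 0)).det *
          (M.submatrix (Fin.succAbove 1) (Fin.succAbove 1)).det -
        (M.submatrix (Fin.succAbove 0) (Fin.succAbove 1)).det *
          (M.submatrix (Fin.succAbove 1) (Fin.succAbove 0)).det := by
  let e : Fin 2 ⊕ Fin n ≃ Fin (n + 2) := finSumFinEquiv.trans (finCongr (add_comm 2 n))
  have he_inl : e (.inl 0) = 0 ∧ e (.inl 1) = 1 := ⟨rfl, rfl⟩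
  have he_inr (i : Fin n) : e (.inr i) = i.succ.succ := Fin.ext (by simp [e])
  have hcentral : toBlocks₂₂ (M.submatrix e e) =
      M.submatrix (fun i => i.succ.succ) (fun j => j.succ.succ) := by
    ext i j
    simp [toBlocks₂₂, he_inr]
  have hjacobi := det_toBlocks₁₁_adjugate (M.submatrix e e)
  rw [adjugate_submatrix_equiv_self, det_submatrix_equiv_self, Fintype.card_fin, pow_one]
    at hjacobi
  rw [← hcentral, ← hjacobi, det_fin_two]
  simp only [toBlocks₁₁, of_apply, submatrix_apply, he_inl, adjugate_fin_succ_eq_det_submatrix,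
    Fin.val_zero, Fin.val_one, Fin.succAbove_zero]
  ring
end

section
/- Let E = det(m_{ij}) be an n×n determinant over a field, let k < n, let F be the lower-right (n−k)×(n−k) principal minor of E, and for 1 ≤ i,j ≤ k let g_{ij} be the (n−k+1)×(n−k+1) minor of E obtained by bordering F with row i and column j (i.e. the minor on rows {i, k+1, …, n} and columns {j, k+1, …, n}). Then det(g_{ij})_{1≤i,j≤k} = F^{k−1} · E. -/
/-!
Write `M = [[A, B], [C, D]]` with `D` the lower-right block and `d = det D`. Right multiplication by
`[[d • 1, 0], [-adj D * C, adj D]]` makes `M` block upper triangular with diagonal blocks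
`d • A - B * adj D * C` and `d • 1`; taking determinants and cancelling powers of `d` gives
`det (d • A - B * adj D * C) = d ^ (k - 1) * det M`. For `k = 1` this says that the bordered minor
`g i j` is the `(i, j)` entry of `d • A - B * adj D * C`, so the general case reads
`det (g i j) = d ^ (k - 1) * det M`. The cancellation needs `d` to be a non-zero-divisor, which
holds for the generic perturbation `X • 1 + M` over `R[X]`; specialising `X = 0` removes it.
-/

open Matrix

namespace Matrix

variable {ι κ R : Type*} [Fintype κ] [DecidableEq κ] [CommRing R]

theorem fromBlocks_mul_fromBlocks_adjugate [Fintype ι] [DecidableEq ι] (A : Matrix ι ι R)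
    (B : Matrix ι κ R) (C : Matrix κ ι R) (D : Matrix κ κ R) :
    fromBlocks A B C D * fromBlocks (D.det • 1) 0 (-(D.adjugate * C)) D.adjugate =
      fromBlocks (D.det • A - B * D.adjugate * C) (B * D.adjugate) 0 (D.det • 1) := by
  simp [fromBlocks_multiply, mul_adjugate, ← Matrix.mul_assoc, sub_eq_add_neg]

theorem det_smul_sub_mul_adjugate_mul_of_isRegular [Fintype ι] [DecidableEq ι] [Nonempty ι]
    (A : Matrix ι ι R) (B : Matrix ι κ R) (C : Matrix κ ι R) (D : Matrix κ κ R)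
    (hD : IsRegular D.det) :
    (D.det • A - B * D.adjugate * C).det =
      D.det ^ (Fintype.card ι - 1) * (fromBlocks A B C D).det := by
  have hprod := congrArg det (fromBlocks_mul_fromBlocks_adjugate A B C D)
  have hadj : D.det * D.adjugate.det = D.det ^ Fintype.card κ := by
    rw [← det_mul, mul_adjugate, det_smul, det_one, mul_one]
  simp only [det_mul, det_fromBlocks_zero₁₂, det_fromBlocks_zero₂₁, det_smul, det_one,
    mul_one] at hprod
  obtain ⟨n, hn⟩ : ∃ n, Fintype.card ι = n + 1 := Nat.exists_eq_add_one.mpr Fintype.card_pos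
  apply (hD.pow (Fintype.card κ + 1)).right
  calc (D.det • A - B * D.adjugate * C).det * D.det ^ (Fintype.card κ + 1)
      = (fromBlocks A B C D).det * D.det ^ Fintype.card ι * (D.det * D.adjugate.det) := by
        rw [pow_succ, ← mul_assoc, ← hprod]; ring
    _ = D.det ^ (Fintype.card ι - 1) * (fromBlocks A B C D).det *
          D.det ^ (Fintype.card κ + 1) := by
        rw [hadj, hn, Nat.add_sub_cancel]; ring

def borderedMinor (M : Matrix (ι ⊕ κ) (ι ⊕ κ) R) (i j : ι) : R :=
  (M.submatrix (Sum.elim (fun _ : Unit => Sum.inl i) Sum.inr)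
    (Sum.elim (fun _ : Unit => Sum.inl j) Sum.inr)).det

theorem borderedMinor_eq_of_isRegular (M : Matrix (ι ⊕ κ) (ι ⊕ κ) R)
    (hD : IsRegular M.toBlocks₂₂.det) (i j : ι) :
    M.borderedMinor i j = (M.toBlocks₂₂.det • M.toBlocks₁₁ -
      M.toBlocks₁₂ * M.toBlocks₂₂.adjugate * M.toBlocks₂₁) i j := by
  set N := M.submatrix (Sum.elim (fun _ : Unit => Sum.inl i) Sum.inr)
    (Sum.elim (fun _ : Unit => Sum.inl j) Sum.inr)
  have hN : N.toBlocks₂₂ = M.toBlocks₂₂ := rfl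
  have h := det_smul_sub_mul_adjugate_mul_of_isRegular N.toBlocks₁₁ N.toBlocks₁₂ N.toBlocks₂₁
    N.toBlocks₂₂ (hN ▸ hD)
  rw [fromBlocks_toBlocks, hN, Fintype.card_unit, pow_zero, one_mul, det_unique] at h
  rw [borderedMinor, ← h]
  simp [N, toBlocks₁₁, toBlocks₁₂, toBlocks₂₁, mul_apply]

theorem det_of_borderedMinor_of_isRegular [Fintype ι] [DecidableEq ι] [Nonempty ι]
    (M : Matrix (ι ⊕ κ) (ι ⊕ κ) R) (hD : IsRegular M.toBlocks₂₂.det) :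
    (of M.borderedMinor).det = M.toBlocks₂₂.det ^ (Fintype.card ι - 1) * M.det := by
  have h := det_smul_sub_mul_adjugate_mul_of_isRegular M.toBlocks₁₁ M.toBlocks₁₂ M.toBlocks₂₁
    M.toBlocks₂₂ hD
  rw [fromBlocks_toBlocks] at h
  rw [← h]
  congr 1
  ext i j
  exact M.borderedMinor_eq_of_isRegular hD i j

theorem map_det_of_borderedMinor {S : Type*} [CommRing S] [Fintype ι] [DecidableEq ι]
    (f : R →+* S) (M : Matrix (ι ⊕ κ) (ι ⊕ κ) R) :
    f (of M.borderedMinor).det = (of (M.map f).borderedMinor).det := by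
  rw [RingHom.map_det]
  congr 1
  ext i j
  simp [borderedMinor, RingHom.map_det, submatrix_map]

theorem toBlocks₂₂_charmatrix [Fintype ι] [DecidableEq ι] (M : Matrix (ι ⊕ κ) (ι ⊕ κ) R) :
    (charmatrix M).toBlocks₂₂ = charmatrix M.toBlocks₂₂ := by
  rw [← fromBlocks_toBlocks M, charmatrix_fromBlocks, toBlocks_fromBlocks₂₂, toBlocks_fromBlocks₂₂]

theorem charmatrix_map_evalRingHom_zero (M : Matrix κ κ R) :
    (charmatrix M).map (Polynomial.evalRingHom 0) = -M := by
  ext i j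
  obtain rfl | hij := eq_or_ne i j <;> simp [*]

theorem det_of_borderedMinor [Fintype ι] [DecidableEq ι] [Nonempty ι]
    (M : Matrix (ι ⊕ κ) (ι ⊕ κ) R) :
    (of M.borderedMinor).det = M.toBlocks₂₂.det ^ (Fintype.card ι - 1) * M.det := by
  -- `charmatrix (-M) = X • 1 + M`
  have hreg : IsRegular (charmatrix (-M)).toBlocks₂₂.det := by
    rw [toBlocks₂₂_charmatrix]
    exact (charpoly_monic _).isRegular
  have h := congrArg (Polynomial.evalRingHom 0) (det_of_borderedMinor_of_isRegular _ hreg)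
  have hM : (charmatrix (-M)).map (Polynomial.evalRingHom 0) = M := by
    rw [charmatrix_map_evalRingHom_zero, neg_neg]
  have hD : (charmatrix (-M)).toBlocks₂₂.map (Polynomial.evalRingHom 0) = M.toBlocks₂₂ :=
    congrArg toBlocks₂₂ hM
  rwa [map_det_of_borderedMinor, map_mul, map_pow, RingHom.map_det, RingHom.map_det,
    RingHom.mapMatrix_apply, RingHom.mapMatrix_apply, hM, hD] at h

theorem det_submatrix_finCases_eq_borderedMinor {k m : ℕ}
    (M : Matrix (Fin (k + m)) (Fin (k + m)) R) (i j : Fin k) :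
    (M.submatrix (Fin.cases (Fin.castAdd m i) (Fin.natAdd k) : Fin (m + 1) → Fin (k + m))
      (Fin.cases (Fin.castAdd m j) (Fin.natAdd k) : Fin (m + 1) → Fin (k + m))).det =
      (M.submatrix finSumFinEquiv finSumFinEquiv).borderedMinor i j := by
  let e : Unit ⊕ Fin m ≃ Fin (m + 1) :=
    (Equiv.sumComm _ _).trans ((Equiv.optionEquivSumPUnit _).symm.trans (finSuccEquiv m).symm)
  rw [borderedMinor, ← det_submatrix_equiv_self e]
  congr 1
  ext (_ | t) (_ | s) <;> simp [e]

end Matrix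

theorem sylvester_identity_general {F : Type*} [Field F] (k m : ℕ) (hk : 0 < k)
    (M : Matrix (Fin (k + m)) (Fin (k + m)) F) :
    Matrix.det (Matrix.of fun i j : Fin k =>
        Matrix.det (M.submatrix
          (Fin.cases (Fin.castAdd m i) (fun t => Fin.natAdd k t) : Fin (m + 1) → Fin (k + m))
          (Fin.cases (Fin.castAdd m j) (fun t => Fin.natAdd k t) : Fin (m + 1) → Fin (k + m)))) =
      (M.submatrix (Fin.natAdd k) (Fin.natAdd k)).det ^ (k - 1) * M.det := by
  have : NeZero k := ⟨hk.ne'⟩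
  have h := det_of_borderedMinor (M.submatrix finSumFinEquiv finSumFinEquiv)
  rw [Fintype.card_fin, det_submatrix_equiv_self] at h
  simp_rw [det_submatrix_finCases_eq_borderedMinor]
  exact h

/-- Sylvester's determinant identity (bordered minors form). The matrix has size
`n = k + m` with `0 < k` and `0 < m` (so that `k < n`). -/
theorem sylvester_identity {F : Type*} [Field F] (k m : ℕ) (hk : 0 < k) (hm : 0 < m)
    (M : Matrix (Fin (k + m)) (Fin (k + m)) F) :
    Matrix.det (Matrix.of fun i j : Fin k =>
        Matrix.det (M.submatrix
          (Fin.cases (Fin.castAdd m i) (fun t => Fin.natAdd k t) : Fin (m + 1) → Fin (k + m))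
          (Fin.cases (Fin.castAdd m j) (fun t => Fin.natAdd k t) : Fin (m + 1) → Fin (k + m)))) =
      (M.submatrix (Fin.natAdd k) (Fin.natAdd k)).det ^ (k - 1) * M.det :=
  sylvester_identity_general k m hk M
end

section
/- Let E be an n×n determinant over a field, let k ≥ 2, and let K be the leading principal k×k minor of the adjugate matrix (matrix of cofactors, transposed) of E. Let F be the lower-right (n−k)×(n−k) principal minor of E. Then K = F · E^{k−1}. -/
/-!
Write `A` in block form and let `B = adj A`, so that `A * B = det A • 1`. Multiplying `A` by
the matrix obtained from the identity by replacing its first block column with that of `B` gives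
a block upper triangular matrix with diagonal blocks `det A • 1` (of size `k`) and `A₂₂`; taking
determinants, `det B₁₁ * det A = det A ^ k * det A₂₂`. Cancelling `det A` is legitimate when it is
a non-zero-divisor; the general case is the specialization at `X = 0` of the case of
`charmatrix (-A)`, whose determinant is monic.
-/

open Matrix

namespace Matrix

variable {ι κ : Type*}

theorem toBlocks₁₁_map {α β : Type*} (M : Matrix (ι ⊕ κ) (ι ⊕ κ) α) (f : α → β) :
    (M.map f).toBlocks₁₁ = M.toBlocks₁₁.map f :=
  rfl

theorem toBlocks₂₂_map {α β : Type*} (M : Matrix (ι ⊕ κ) (ι ⊕ κ) α) (f : α → β) :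
    (M.map f).toBlocks₂₂ = M.toBlocks₂₂.map f :=
  rfl

variable {R : Type*} [CommRing R] [Fintype ι] [Fintype κ] [DecidableEq ι] [DecidableEq κ]

theorem mul_fromBlocks_adjugate_toBlocks_one (A : Matrix (ι ⊕ κ) (ι ⊕ κ) R) :
    A * fromBlocks A.adjugate.toBlocks₁₁ 0 A.adjugate.toBlocks₂₁ 1 =
      fromBlocks (A.det • 1) A.toBlocks₁₂ 0 A.toBlocks₂₂ := by
  set B := A.adjugate
  have hAB : A * B = fromBlocks (A.det • 1) 0 0 (A.det • 1) := by
    rw [mul_adjugate, ← fromBlocks_one, fromBlocks_smul]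
    simp only [smul_zero]
  rw [← fromBlocks_toBlocks A, ← fromBlocks_toBlocks B, fromBlocks_multiply,
    fromBlocks_inj] at hAB
  obtain ⟨h₁₁, -, h₂₁, -⟩ := hAB
  rw [fromBlocks_toBlocks] at h₁₁
  nth_rewrite 1 [← fromBlocks_toBlocks A]
  rw [fromBlocks_multiply, h₁₁, h₂₁]
  simp

theorem det_toBlocks₁₁_adjugate_mul_det (A : Matrix (ι ⊕ κ) (ι ⊕ κ) R) :
    A.adjugate.toBlocks₁₁.det * A.det = A.toBlocks₂₂.det * A.det ^ Fintype.card ι := by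
  have h := congrArg det (mul_fromBlocks_adjugate_toBlocks_one A)
  rw [det_mul, det_fromBlocks_zero₁₂, det_fromBlocks_zero₂₁, det_one, mul_one, det_smul,
    det_one, mul_one] at h
  linear_combination h

theorem det_toBlocks₁₁_adjugate_of_isRightRegular [Nonempty ι] {A : Matrix (ι ⊕ κ) (ι ⊕ κ) R}
    (hA : IsRightRegular A.det) :
    A.adjugate.toBlocks₁₁.det = A.toBlocks₂₂.det * A.det ^ (Fintype.card ι - 1) := by
  apply hA
  dsimp only
  rw [det_toBlocks₁₁_adjugate_mul_det, mul_assoc, ← pow_succ,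
    Nat.sub_add_cancel Fintype.card_pos]

theorem charmatrix_neg_map_eval_zero {n : Type*} [Fintype n] [DecidableEq n]
    (M : Matrix n n R) : (charmatrix (-M)).map (Polynomial.evalRingHom 0) = M := by
  ext i j
  by_cases h : i = j
  · subst h
    simp [charmatrix_apply_eq]
  · simp [charmatrix_apply_ne _ _ _ h]

theorem det_toBlocks₁₁_adjugate_s3 [Nonempty ι] (A : Matrix (ι ⊕ κ) (ι ⊕ κ) R) :
    A.adjugate.toBlocks₁₁.det = A.toBlocks₂₂.det * A.det ^ (Fintype.card ι - 1) := by
  have h := congrArg (Polynomial.evalRingHom 0) <|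
    det_toBlocks₁₁_adjugate_of_isRightRegular (charpoly_monic (-A)).isRegular.right
  simp only [map_mul, map_pow, RingHom.map_det, RingHom.mapMatrix_apply, ← toBlocks₁₁_map,
    ← toBlocks₂₂_map] at h
  rwa [← RingHom.mapMatrix_apply, RingHom.map_adjugate, RingHom.mapMatrix_apply,
    charmatrix_neg_map_eval_zero] at h

end Matrix

/-- Jacobi's theorem on minors of the adjugate: the leading principal `k × k` minor of the
adjugate of `M` equals the complementary lower-right `(n-k) × (n-k)` principal minor of `M`
times `(det M)^(k-1)`. Here the matrix has size `n = k + m`. -/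
theorem jacobi_adjugate_minor {F : Type*} [Field F] (k m : ℕ) (hk : 2 ≤ k)
    (M : Matrix (Fin (k + m)) (Fin (k + m)) F) :
    ((M.adjugate).submatrix (Fin.castAdd m) (Fin.castAdd m)).det =
      (M.submatrix (Fin.natAdd k) (Fin.natAdd k)).det * M.det ^ (k - 1) := by
  have : Nonempty (Fin k) := ⟨⟨0, by omega⟩⟩
  have h := det_toBlocks₁₁_adjugate_s3 (M.submatrix finSumFinEquiv finSumFinEquiv)
  rwa [adjugate_submatrix_equiv_self, det_submatrix_equiv_self, Fintype.card_fin] at h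
end

section
/- Let n ≥ 1 and let (u_i, v_i, k_i; x_i, y_i, l_i), 1 ≤ i ≤ n+1, be elements of a field with all l_j − k_i nonzero, and write (u,v,k;x,y,l) for the (n+1)-st sextuple. Let D_{n+1} = det[(y_j u_i − x_j v_i)/(l_j − k_i)]_{1≤i,j≤n+1} and let D_n be its leading principal n×n minor, assumed nonzero. Define U_n = (1/D_n)·det of the (n+1)×(n+1) matrix whose (i,j) entry for j ≤ n is (y_j u_i − x_j v_i)/(l_j − k_i) (with row n+1 using (u,v,k) in place of (u_i,v_i,k_i)) and whose last column is (u_1,…,u_n,u)ᵀ; define V_n analogously with last column (v_1,…,v_n,v)ᵀ; define X_n = (1/D_n)·det of the (n+1)×(n+1) matrix whose (i,j) entry for i ≤ n is (y_j u_i − x_j v_i)/(l_j − k_i) (with column n+1 using (x,y,l) in place of (x_j,y_j,l_j)) and whose last row is (x_1,…,x_n,x); define Y_n analogously with last row (y_1,…,y_n,y). Then D_{n+1}/D_n = (Y_n·U_n − X_n·V_n)/(l − k). -/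
/-!
Each of the five determinants is `D_n` times a Schur complement with respect to the leading
block `B`: with `c`, `b` the last row and column of the matrix, `p = c B⁻¹` and `w = B⁻¹ b`,
`D_{n+1}/D_n = A_{n+1,n+1} - p·b`, `U_n = u - p·u'`, `X_n = x - x'·w`, and so on, where `u'`, `x'`
are the first `n` entries. The matrix satisfies the rank-two displacement equation
`A diag(l) - diag(k) A = u yᵀ - v xᵀ`; pairing this equation for `B` with `p` on the left and `w`
on the right, and eliminating the border through the same equation for the last row, column and
corner, shows that the Schur complement satisfies it too, which is the claim.
-/

open Matrix Fin Finset

theorem Matrix.det_eq_det_submatrix_castSucc_mul {R : Type*} [CommRing R] {n : ℕ}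
    (M : Matrix (Fin (n + 1)) (Fin (n + 1)) R) [Invertible (M.submatrix castSucc castSucc)] :
    M.det = (M.submatrix castSucc castSucc).det *
      (M (last n) (last n) - (fun j => M (last n) j.castSucc) ⬝ᵥ
        ⅟(M.submatrix castSucc castSucc) *ᵥ fun i => M i.castSucc (last n)) := by
  have hblocks : M.submatrix finSumFinEquiv finSumFinEquiv =
      fromBlocks (M.submatrix castSucc castSucc) (of fun i (_ : Fin 1) => M i.castSucc (last n))
        (of fun _ j => M (last n) j.castSucc) (of fun _ _ => M (last n) (last n)) := by
    ext (i | i) (j | j) <;> simp [Fin.fin_one_eq_zero] <;> rfl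
  rw [← det_submatrix_equiv_self finSumFinEquiv M, hblocks, det_fromBlocks₁₁, det_fin_one,
    dotProduct_mulVec]
  rfl

theorem Matrix.det_div_det_of_submatrix_castSucc_eq {K : Type*} [Field K] {n : ℕ}
    (M : Matrix (Fin (n + 1)) (Fin (n + 1)) K) {B : Matrix (Fin n) (Fin n) K}
    (hMB : M.submatrix castSucc castSucc = B) (hB : B.det ≠ 0) :
    M.det / B.det = M (last n) (last n) - (fun j => M (last n) j.castSucc) ⬝ᵥ
        B⁻¹ *ᵥ fun i => M i.castSucc (last n) := by
  subst hMB
  have := invertibleOfIsUnitDet _ hB.isUnit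
  rw [det_eq_det_submatrix_castSucc_mul M, invOf_eq_nonsing_inv, mul_div_cancel_left₀ _ hB]

theorem schur_complement_displacement {R : Type*} [CommRing R] {n : ℕ}
    (C : Matrix (Fin (n + 1)) (Fin (n + 1)) R) (u v k x y l : Fin (n + 1) → R)
    (hC : ∀ i j, C i j * (l j - k i) = u i * y j - v i * x j) (p w : Fin n → R)
    (hp : p ᵥ* C.submatrix castSucc castSucc = fun j => C (last n) j.castSucc)
    (hw : C.submatrix castSucc castSucc *ᵥ w = fun i => C i.castSucc (last n)) :
    (l (last n) - k (last n)) * (C (last n) (last n) - p ⬝ᵥ fun i => C i.castSucc (last n)) =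
      (y (last n) - (y ∘ castSucc) ⬝ᵥ w) * (u (last n) - p ⬝ᵥ (u ∘ castSucc)) -
        (x (last n) - (x ∘ castSucc) ⬝ᵥ w) * (v (last n) - p ⬝ᵥ (v ∘ castSucc)) := by
  have hp' (j : Fin n) : ∑ i, p i * C i.castSucc j.castSucc = C (last n) j.castSucc :=
    congrFun hp j
  have hw' (i : Fin n) : ∑ j, C i.castSucc j.castSucc * w j = C i.castSucc (last n) :=
    congrFun hw i
  have hpw : ∑ j, C (last n) j.castSucc * w j = p ⬝ᵥ fun i => C i.castSucc (last n) := by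
    simp only [← hp', ← hw', dotProduct, sum_mul, mul_sum, mul_assoc]
    exact sum_comm
  have hdouble : ∑ i, ∑ j, p i * C i.castSucc j.castSucc * w j * (l j.castSucc - k i.castSucc) =
      (p ⬝ᵥ (u ∘ castSucc)) * ((y ∘ castSucc) ⬝ᵥ w) -
        (p ⬝ᵥ (v ∘ castSucc)) * ((x ∘ castSucc) ⬝ᵥ w) := by
    simp only [dotProduct, sum_mul_sum, ← sum_sub_distrib, Function.comp]
    exact sum_congr rfl fun i _ => sum_congr rfl fun j _ => by
      linear_combination p i * w j * hC i.castSucc j.castSucc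
  have hrow : ∑ i, ∑ j, p i * C i.castSucc j.castSucc * w j * l j.castSucc =
      k (last n) * (p ⬝ᵥ fun i => C i.castSucc (last n)) + u (last n) * ((y ∘ castSucc) ⬝ᵥ w)
        - v (last n) * ((x ∘ castSucc) ⬝ᵥ w) :=
    calc _ = ∑ j, C (last n) j.castSucc * w j * l j.castSucc := by
          rw [sum_comm]
          exact sum_congr rfl fun j _ => by simp only [← hp', sum_mul]
      _ = ∑ j, (k (last n) * (C (last n) j.castSucc * w j) + u (last n) * (y j.castSucc * w j)
            - v (last n) * (x j.castSucc * w j)) :=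
          sum_congr rfl fun j _ => by linear_combination w j * hC (last n) j.castSucc
      _ = _ := by simp only [sum_add_distrib, sum_sub_distrib, ← mul_sum, hpw]; rfl
  have hcol : ∑ i, ∑ j, p i * C i.castSucc j.castSucc * w j * k i.castSucc =
      l (last n) * (p ⬝ᵥ fun i => C i.castSucc (last n)) - y (last n) * (p ⬝ᵥ (u ∘ castSucc))
        + x (last n) * (p ⬝ᵥ (v ∘ castSucc)) :=
    calc _ = ∑ i, p i * C i.castSucc (last n) * k i.castSucc :=
          sum_congr rfl fun i _ => by simp only [← hw', mul_sum, sum_mul, mul_assoc]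
      _ = ∑ i, (l (last n) * (p i * C i.castSucc (last n)) - y (last n) * (p i * u i.castSucc)
            + x (last n) * (p i * v i.castSucc)) :=
          sum_congr rfl fun i _ => by linear_combination -p i * hC i.castSucc (last n)
      _ = _ := by simp only [sum_add_distrib, sum_sub_distrib, ← mul_sum]; rfl
  simp only [mul_sub, sum_sub_distrib, hrow, hcol] at hdouble
  linear_combination hC (last n) (last n) + hdouble

theorem reproducing_determinant_general {F : Type*} [Field F] (n : ℕ)
    (u v k x y l : Fin (n + 1) → F) (hlk : ∀ i j, l j ≠ k i)
    (A : Matrix (Fin (n + 1)) (Fin (n + 1)) F)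
    (hA : A = Matrix.of fun i j => (y j * u i - x j * v i) / (l j - k i))
    (Dn : F) (hDn : Dn = (A.submatrix Fin.castSucc Fin.castSucc).det) (hDn0 : Dn ≠ 0)
    (Un Vn Xn Yn : F)
    (hU : Un = (1 / Dn) * Matrix.det (Matrix.of fun i j : Fin (n + 1) =>
      Fin.lastCases (u i)
        (fun j' => (y j'.castSucc * u i - x j'.castSucc * v i) / (l j'.castSucc - k i)) j))
    (hV : Vn = (1 / Dn) * Matrix.det (Matrix.of fun i j : Fin (n + 1) =>
      Fin.lastCases (v i)
        (fun j' => (y j'.castSucc * u i - x j'.castSucc * v i) / (l j'.castSucc - k i)) j))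
    (hX : Xn = (1 / Dn) * Matrix.det (Matrix.of fun i j : Fin (n + 1) =>
      Fin.lastCases (x j)
        (fun i' => (y j * u i'.castSucc - x j * v i'.castSucc) / (l j - k i'.castSucc)) i))
    (hY : Yn = (1 / Dn) * Matrix.det (Matrix.of fun i j : Fin (n + 1) =>
      Fin.lastCases (y j)
        (fun i' => (y j * u i'.castSucc - x j * v i'.castSucc) / (l j - k i'.castSucc)) i)) :
    A.det / Dn = (Yn * Un - Xn * Vn) / (l (Fin.last n) - k (Fin.last n)) := by
  set B := A.submatrix castSucc castSucc
  set b : Fin n → F := fun i => A i.castSucc (last n)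
  set c : Fin n → F := fun j => A (last n) j.castSucc
  have hB : B.det ≠ 0 := hDn ▸ hDn0
  have hschur (M) (hM : M.submatrix castSucc castSucc = B) :=
    det_div_det_of_submatrix_castSucc_eq M hM hB
  have hAn : A.det / Dn = A (last n) (last n) - c ⬝ᵥ B⁻¹ *ᵥ b := by
    rw [hDn, hschur A rfl]
  have hUn : Un = u (last n) - c ⬝ᵥ B⁻¹ *ᵥ (u ∘ castSucc) := by
    rw [hU, one_div_mul_eq_div, hDn, hschur _ (by ext; simp [B, hA])]
    simp [c, hA, Function.comp_def]
  have hVn : Vn = v (last n) - c ⬝ᵥ B⁻¹ *ᵥ (v ∘ castSucc) := by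
    rw [hV, one_div_mul_eq_div, hDn, hschur _ (by ext; simp [B, hA])]
    simp [c, hA, Function.comp_def]
  have hXn : Xn = x (last n) - (x ∘ castSucc) ⬝ᵥ B⁻¹ *ᵥ b := by
    rw [hX, one_div_mul_eq_div, hDn, hschur _ (by ext; simp [B, hA])]
    simp [b, hA, Function.comp_def]
  have hYn : Yn = y (last n) - (y ∘ castSucc) ⬝ᵥ B⁻¹ *ᵥ b := by
    rw [hY, one_div_mul_eq_div, hDn, hschur _ (by ext; simp [B, hA])]
    simp [b, hA, Function.comp_def]
  have hC : ∀ i j, A i j * (l j - k i) = u i * y j - v i * x j := fun i j => by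
    rw [hA, of_apply, div_mul_cancel₀ _ (sub_ne_zero.2 (hlk i j))]
    ring
  rw [hAn, hUn, hVn, hXn, hYn, eq_div_iff (sub_ne_zero.2 (hlk _ _)), mul_comm,
    dotProduct_mulVec c, dotProduct_mulVec c, dotProduct_mulVec c]
  exact schur_complement_displacement A u v k x y l hC _ _
    (by rw [vecMul_vecMul, nonsing_inv_mul _ hB.isUnit, vecMul_one])
    (by rw [mulVec_mulVec, mul_nonsing_inv _ hB.isUnit, one_mulVec])

/-- Main theorem (reproducing determinant).  The six families `u v k x y l` are indexed by
`Fin (n+1)`, the last sextuple being `(u,v,k;x,y,l)` of the informal statement. -/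
theorem reproducing_determinant {F : Type*} [Field F] (n : ℕ) (hn : 1 ≤ n)
    (u v k x y l : Fin (n + 1) → F) (hlk : ∀ i j, l j ≠ k i)
    (A : Matrix (Fin (n + 1)) (Fin (n + 1)) F)
    (hA : A = Matrix.of fun i j => (y j * u i - x j * v i) / (l j - k i))
    (Dn : F) (hDn : Dn = (A.submatrix Fin.castSucc Fin.castSucc).det) (hDn0 : Dn ≠ 0)
    (Un Vn Xn Yn : F)
    (hU : Un = (1 / Dn) * Matrix.det (Matrix.of fun i j : Fin (n + 1) =>
      Fin.lastCases (u i)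
        (fun j' => (y j'.castSucc * u i - x j'.castSucc * v i) / (l j'.castSucc - k i)) j))
    (hV : Vn = (1 / Dn) * Matrix.det (Matrix.of fun i j : Fin (n + 1) =>
      Fin.lastCases (v i)
        (fun j' => (y j'.castSucc * u i - x j'.castSucc * v i) / (l j'.castSucc - k i)) j))
    (hX : Xn = (1 / Dn) * Matrix.det (Matrix.of fun i j : Fin (n + 1) =>
      Fin.lastCases (x j)
        (fun i' => (y j * u i'.castSucc - x j * v i'.castSucc) / (l j - k i'.castSucc)) i))
    (hY : Yn = (1 / Dn) * Matrix.det (Matrix.of fun i j : Fin (n + 1) =>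
      Fin.lastCases (y j)
        (fun i' => (y j * u i'.castSucc - x j * v i'.castSucc) / (l j - k i'.castSucc)) i)) :
    A.det / Dn = (Yn * Un - Xn * Vn) / (l (Fin.last n) - k (Fin.last n)) :=
  reproducing_determinant_general n u v k x y l hlk A hA Dn hDn hDn0 Un Vn Xn Yn hU hV hX hY
end

section
/- Let u_i, v_i, k_i (1 ≤ i ≤ n) and u, v, k be field elements with all sums k_i + k_j, k + k_j, and 2k nonzero. Set x_i = u_i, y_i = −v_i, l_i = −k_i for 1 ≤ i ≤ n, and x = u, y = −v, l = −k. Then D_{n+1}/D_n = (1/k)·U_n·V_n, where D_{n+1} = det[(u_i v_j + u_j v_i)/(k_i + k_j)]_{1≤i,j≤n+1} (with (u_{n+1},v_{n+1},k_{n+1}) = (u,v,k)), D_n is its leading n×n minor, and U_n, V_n are as in the main theorem specialized to this data. -/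
/-!
With `K = diagonal k`, the matrix `A` satisfies the displacement equation
`K A + A K = u vᵀ + v uᵀ`. For any square matrix, the last row `r` and last column `s` of `adj A`
satisfy `r A = det A · e` and `A s = det A · e`, so `r (K A + A K) s = 2 · det A · k · D_n`.
The displacement equation turns the same quantity into `(r ⬝ u)(v ⬝ s) + (r ⬝ v)(u ⬝ s)`, and by
Cramer's rule these dot products are determinants of `A` with its last row or column replaced;
when `A` is symmetric they are `D_n U_n` and `D_n V_n`.
-/

open Matrix

theorem Matrix.dotProduct_vecMulVec_mulVec {ι R : Type*} [Fintype ι] [CommRing R]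
    (x u v y : ι → R) :
    x ⬝ᵥ (vecMulVec u v *ᵥ y) = (x ⬝ᵥ u) * (v ⬝ᵥ y) := by
  rw [vecMulVec_mulVec, op_smul_eq_smul, dotProduct_smul, smul_eq_mul, mul_comm]

section Displacement

variable {ι R : Type*} [Fintype ι] [DecidableEq ι] [CommRing R]

theorem Matrix.det_updateCol_eq_row_adjugate_dotProduct (A : Matrix ι ι R) (p : ι) (b : ι → R) :
    (A.updateCol p b).det = (adjugate A).row p ⬝ᵥ b := by
  rw [← cramer_apply, cramer_eq_adjugate_mulVec]
  rfl

theorem Matrix.det_updateRow_eq_dotProduct_col_adjugate (A : Matrix ι ι R) (p : ι) (b : ι → R) :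
    (A.updateRow p b).det = b ⬝ᵥ (adjugate A).col p := by
  rw [← cramer_transpose_apply, cramer_eq_adjugate_mulVec, ← adjugate_transpose, mulVec_transpose]
  rfl

theorem Matrix.row_adjugate_vecMul (A : Matrix ι ι R) (p : ι) :
    (adjugate A).row p ᵥ* A = A.det • Pi.single p 1 := by
  rw [← single_one_vecMul, vecMul_vecMul, adjugate_mul, vecMul_smul, vecMul_one]

theorem Matrix.mulVec_col_adjugate (A : Matrix ι ι R) (p : ι) :
    A *ᵥ (adjugate A).col p = A.det • Pi.single p 1 := by
  rw [← mulVec_single_one, mulVec_mulVec, mul_adjugate, smul_mulVec, one_mulVec]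

theorem Matrix.row_adjugate_dotProduct_displacement_mulVec_col_adjugate
    (A : Matrix ι ι R) (k : ι → R) (p : ι) :
    (adjugate A).row p ⬝ᵥ ((diagonal k * A + A * diagonal k) *ᵥ (adjugate A).col p) =
      2 * (A.det * k p * adjugate A p p) := by
  rw [add_mulVec, dotProduct_add, ← mulVec_mulVec, ← mulVec_mulVec, mulVec_col_adjugate,
    dotProduct_mulVec _ A, row_adjugate_vecMul]
  simp only [mulVec_smul, diagonal_mulVec_single, dotProduct_smul, smul_dotProduct,
    dotProduct_single, single_dotProduct, mulVec_diagonal, row_apply, col_apply, smul_eq_mul]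
  ring

theorem Matrix.two_mul_det_mul_adjugate_eq_of_displacement {A : Matrix ι ι R} {k u v : ι → R}
    (h : diagonal k * A + A * diagonal k = vecMulVec u v + vecMulVec v u) (p : ι) :
    2 * (A.det * k p * adjugate A p p) =
      (A.updateCol p u).det * (A.updateRow p v).det +
        (A.updateCol p v).det * (A.updateRow p u).det := by
  rw [← row_adjugate_dotProduct_displacement_mulVec_col_adjugate, h, add_mulVec, dotProduct_add,
    dotProduct_vecMulVec_mulVec, dotProduct_vecMulVec_mulVec,
    det_updateCol_eq_row_adjugate_dotProduct, det_updateCol_eq_row_adjugate_dotProduct,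
    det_updateRow_eq_dotProduct_col_adjugate, det_updateRow_eq_dotProduct_col_adjugate]

theorem Matrix.IsSymm.det_updateRow {A : Matrix ι ι R} (hA : A.IsSymm) (p : ι) (b : ι → R) :
    (A.updateRow p b).det = (A.updateCol p b).det := by
  rw [← det_transpose, ← updateCol_transpose, hA.eq]

theorem Matrix.IsSymm.det_mul_mul_adjugate_eq_of_displacement [IsDomain R] (h2 : (2 : R) ≠ 0)
    {A : Matrix ι ι R} (hA : A.IsSymm) {k u v : ι → R}
    (h : diagonal k * A + A * diagonal k = vecMulVec u v + vecMulVec v u) (p : ι) :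
    A.det * k p * A.adjugate p p = (A.updateCol p u).det * (A.updateCol p v).det := by
  have := two_mul_det_mul_adjugate_eq_of_displacement h p
  rw [hA.det_updateRow, hA.det_updateRow, mul_comm (A.updateCol p v).det, ← two_mul] at this
  exact mul_left_cancel₀ h2 this

end Displacement

theorem Matrix.adjugate_last_last {R : Type*} [CommRing R] {n : ℕ}
    (A : Matrix (Fin (n + 1)) (Fin (n + 1)) R) :
    adjugate A (Fin.last n) (Fin.last n) = (A.submatrix Fin.castSucc Fin.castSucc).det := by
  rw [adjugate_fin_succ_eq_det_submatrix, Fin.succAbove_last, Fin.val_last,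
    Even.neg_one_pow ⟨n, rfl⟩, one_mul]

section SymmetricCauchyLike

variable {ι F : Type*} [Field F]

def symmetricCauchyLike (u v k : ι → F) : Matrix ι ι F :=
  of fun i j => (u i * v j + u j * v i) / (k i + k j)

theorem symmetricCauchyLike_isSymm (u v k : ι → F) : (symmetricCauchyLike u v k).IsSymm := by
  ext i j
  simp only [symmetricCauchyLike, transpose_apply, of_apply, add_comm]

theorem diagonal_mul_symmetricCauchyLike_add [Fintype ι] [DecidableEq ι] {u v k : ι → F}
    (hsum : ∀ i j, k i + k j ≠ 0) :
    diagonal k * symmetricCauchyLike u v k + symmetricCauchyLike u v k * diagonal k =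
      vecMulVec u v + vecMulVec v u := by
  ext i j
  simp only [Matrix.add_apply, diagonal_mul, mul_diagonal, vecMulVec_apply, symmetricCauchyLike,
    of_apply]
  field_simp [hsum i j]

/- The matrices defining `U_n` and `V_n` are the Cauchy-like matrices of the triples
`(u_i, v_i, k_i)` and `(x_j, y_j, l_j) = (u_j, -v_j, -k_j)`, with the last column replaced. -/
theorem lastCases_eq_updateCol_symmetricCauchyLike {n : ℕ} (u v k w : Fin (n + 1) → F) :
    (of fun i j : Fin (n + 1) => Fin.lastCases (w i)
        (fun j' => ((-v j'.castSucc) * u i - u j'.castSucc * v i) / ((-k j'.castSucc) - k i)) j) =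
      (symmetricCauchyLike u v k).updateCol (Fin.last n) w := by
  ext i j
  induction j using Fin.lastCases with
  | last => simp
  | cast j =>
    rw [of_apply, Fin.lastCases_castSucc, updateCol_ne (Fin.castSucc_lt_last j).ne,
      symmetricCauchyLike, of_apply, ← neg_div_neg_eq]
    ring_nf

end SymmetricCauchyLike

theorem symmetric_factorization_general {F : Type*} [Field F] (n : ℕ)
    (u v k : Fin (n + 1) → F) (hsum : ∀ i j, k i + k j ≠ 0)
    (A : Matrix (Fin (n + 1)) (Fin (n + 1)) F)
    (hA : A = Matrix.of fun i j => (u i * v j + u j * v i) / (k i + k j))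
    (Dn : F) (hDn : Dn = (A.submatrix Fin.castSucc Fin.castSucc).det)
    (Un Vn : F)
    (hU : Un = (1 / Dn) * Matrix.det (Matrix.of fun i j : Fin (n + 1) =>
      Fin.lastCases (u i)
        (fun j' => ((-v j'.castSucc) * u i - u j'.castSucc * v i) /
          ((-k j'.castSucc) - k i)) j))
    (hV : Vn = (1 / Dn) * Matrix.det (Matrix.of fun i j : Fin (n + 1) =>
      Fin.lastCases (v i)
        (fun j' => ((-v j'.castSucc) * u i - u j'.castSucc * v i) /
          ((-k j'.castSucc) - k i)) j)) :
    A.det / Dn = (1 / k (Fin.last n)) * Un * Vn := by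
  have hk : k (Fin.last n) ≠ 0 := fun h => hsum (Fin.last n) (Fin.last n) (by rw [h, add_zero])
  have h2 : (2 : F) ≠ 0 := fun h => hsum (Fin.last n) (Fin.last n) (by rw [← two_mul, h, zero_mul])
  replace hA : A = symmetricCauchyLike u v k := hA
  have key := (hA ▸ symmetricCauchyLike_isSymm u v k).det_mul_mul_adjugate_eq_of_displacement h2
    (hA ▸ diagonal_mul_symmetricCauchyLike_add hsum) (Fin.last n)
  rw [adjugate_last_last, ← hDn] at key
  rw [hU, hV, lastCases_eq_updateCol_symmetricCauchyLike,
    lastCases_eq_updateCol_symmetricCauchyLike, ← hA]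
  rcases eq_or_ne Dn 0 with rfl | hDn0
  · simp
  field_simp
  linear_combination key

/-- Factorization in the symmetric case `(x_i, y_i, l_i) = (u_i, -v_i, -k_i)` (including the
last triple): `D_{n+1}/D_n = (1/k) · U_n · V_n`. -/
theorem symmetric_factorization {F : Type*} [Field F] (n : ℕ)
    (u v k : Fin (n + 1) → F) (hsum : ∀ i j, k i + k j ≠ 0)
    (A : Matrix (Fin (n + 1)) (Fin (n + 1)) F)
    (hA : A = Matrix.of fun i j => (u i * v j + u j * v i) / (k i + k j))
    (Dn : F) (hDn : Dn = (A.submatrix Fin.castSucc Fin.castSucc).det) (hDn0 : Dn ≠ 0)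
    (Un Vn : F)
    (hU : Un = (1 / Dn) * Matrix.det (Matrix.of fun i j : Fin (n + 1) =>
      Fin.lastCases (u i)
        (fun j' => ((-v j'.castSucc) * u i - u j'.castSucc * v i) /
          ((-k j'.castSucc) - k i)) j))
    (hV : Vn = (1 / Dn) * Matrix.det (Matrix.of fun i j : Fin (n + 1) =>
      Fin.lastCases (v i)
        (fun j' => ((-v j'.castSucc) * u i - u j'.castSucc * v i) /
          ((-k j'.castSucc) - k i)) j)) :
    A.det / Dn = (1 / k (Fin.last n)) * Un * Vn :=
  symmetric_factorization_general n u v k hsum A hA Dn hDn Un Vn hU hV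
end

section
/- With the symmetric specialization x_i = u_i, y_i = −v_i, l_i = −k_i (1 ≤ i ≤ n) fixed, the functions U_n and X_n of the main theorem, viewed as functions of a single triple of field elements, satisfy X_n(u, −v, −k) = U_n(u, v, k), and similarly Y_n(u, −v, −k) = −V_n(u, v, k), for all (u,v,k) with all k + k_j ≠ 0. -/
open Matrix

/-!
Both `X_n` and `U_n` are built on the same `n × n` core `A`, which is symmetric in the
specialization. Transposing the matrix of `U_n(u,v,k)` turns its bordering row into a bordering
column, and that column is exactly the one of `X_n(u,-v,-k)`; the bordering row `(u_1,…,u_n,u)`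
is shared. For `Y_n` versus `V_n` the same transposition leaves the last row negated, which
flips the sign of the determinant.
-/

namespace Matrix

variable {R : Type*} {n : ℕ}

/-- The block matrix `!![A, c; rᵀ, d]`. -/
def bordered (A : Matrix (Fin n) (Fin n) R) (c r : Fin n → R) (d : R) :
    Matrix (Fin (n + 1)) (Fin (n + 1)) R :=
  of fun i j => Fin.lastCases (Fin.lastCases d r j) (fun i' => Fin.lastCases (c i') (A i') j) i

theorem transpose_bordered (A : Matrix (Fin n) (Fin n) R) (c r : Fin n → R) (d : R) :
    (bordered A c r d)ᵀ = bordered Aᵀ r c d := by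
  ext i j
  induction i using Fin.lastCases <;> induction j using Fin.lastCases <;> simp [bordered]

theorem det_bordered_neg_last_row [CommRing R] (A : Matrix (Fin n) (Fin n) R) (c r : Fin n → R)
    (d : R) : (bordered A c (-r) (-d)).det = -(bordered A c r d).det := by
  have h : bordered A c (-r) (-d) =
      updateRow (bordered A c r d) (Fin.last n) ((-1 : R) • bordered A c r d (Fin.last n)) := by
    ext i j
    induction i using Fin.lastCases <;> induction j using Fin.lastCases <;>
      simp [bordered, updateRow_apply, (Fin.castSucc_lt_last _).ne]
  rw [h, det_updateRow_smul, updateRow_eq_self, neg_one_mul]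

end Matrix

theorem symmetric_UX_relations_general {F : Type*} [Field F] (n : ℕ)
    (u v k : Fin n → F)
    (Dn : F)
    (U V X Y : F → F → F → F)
    (hU : ∀ a b c, U a b c = (1 / Dn) * Matrix.det (Matrix.of fun i j : Fin (n + 1) =>
      Fin.lastCases (motive := fun _ => F)
        (Fin.lastCases a (fun j' => ((-v j') * a - u j' * b) / ((-k j') - c)) j)
        (fun i' => Fin.lastCases (u i')
          (fun j' => ((-v j') * u i' - u j' * v i') / ((-k j') - k i')) j) i))
    (hV : ∀ a b c, V a b c = (1 / Dn) * Matrix.det (Matrix.of fun i j : Fin (n + 1) =>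
      Fin.lastCases (motive := fun _ => F)
        (Fin.lastCases b (fun j' => ((-v j') * a - u j' * b) / ((-k j') - c)) j)
        (fun i' => Fin.lastCases (v i')
          (fun j' => ((-v j') * u i' - u j' * v i') / ((-k j') - k i')) j) i))
    (hX : ∀ a b c, X a b c = (1 / Dn) * Matrix.det (Matrix.of fun i j : Fin (n + 1) =>
      Fin.lastCases (motive := fun _ => F)
        (Fin.lastCases a (fun j' => u j') j)
        (fun i' => Fin.lastCases ((b * u i' - a * v i') / (c - k i'))
          (fun j' => ((-v j') * u i' - u j' * v i') / ((-k j') - k i')) j) i))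
    (hY : ∀ a b c, Y a b c = (1 / Dn) * Matrix.det (Matrix.of fun i j : Fin (n + 1) =>
      Fin.lastCases (motive := fun _ => F)
        (Fin.lastCases b (fun j' => -v j') j)
        (fun i' => Fin.lastCases ((b * u i' - a * v i') / (c - k i'))
          (fun j' => ((-v j') * u i' - u j' * v i') / ((-k j') - k i')) j) i)) :
    ∀ a b c : F, (∀ j : Fin n, c + k j ≠ 0) →
      X a (-b) (-c) = U a b c ∧ Y a (-b) (-c) = -(V a b c) := by
  intro a b c _
  set A : Matrix (Fin n) (Fin n) F := of fun i j => ((-v j) * u i - u j * v i) / ((-k j) - k i)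
  set w : Fin n → F := fun j => ((-v j) * a - u j * b) / ((-k j) - c)
  have hA : Aᵀ = A := by ext i j; simp only [A, transpose_apply, of_apply]; ring
  have hw : (fun i => ((-b) * u i - a * v i) / ((-c) - k i)) = w := by funext i; simp only [w]; ring
  have hUA : U a b c = 1 / Dn * (bordered A u w a).det := hU a b c
  have hVA : V a b c = 1 / Dn * (bordered A v w b).det := hV a b c
  have hXA : X a (-b) (-c) = 1 / Dn * (bordered A w u a).det := by
    rw [hX, ← hw]; rfl
  have hYA : Y a (-b) (-c) = 1 / Dn * (bordered A w (-v) (-b)).det := by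
    rw [hY, ← hw]; rfl
  constructor
  · rw [hXA, hUA, ← det_transpose (bordered A u w a), transpose_bordered, hA]
  · rw [hYA, hVA, det_bordered_neg_last_row, ← det_transpose (bordered A v w b),
      transpose_bordered, hA, mul_neg]

/-- In the symmetric specialization `x_i = u_i, y_i = -v_i, l_i = -k_i` of the first `n`
sextuples, the bordered determinants satisfy `X_n(u,-v,-k) = U_n(u,v,k)` and
`Y_n(u,-v,-k) = -V_n(u,v,k)`. -/
theorem symmetric_UX_relations {F : Type*} [Field F] (n : ℕ)
    (u v k : Fin n → F) (hsum : ∀ i j : Fin n, k i + k j ≠ 0)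
    (Dn : F)
    (hDn : Dn = Matrix.det (Matrix.of fun i j : Fin n => (u i * v j + u j * v i) / (k i + k j)))
    (hDn0 : Dn ≠ 0)
    (U V X Y : F → F → F → F)
    (hU : ∀ a b c, U a b c = (1 / Dn) * Matrix.det (Matrix.of fun i j : Fin (n + 1) =>
      Fin.lastCases (motive := fun _ => F)
        (Fin.lastCases a (fun j' => ((-v j') * a - u j' * b) / ((-k j') - c)) j)
        (fun i' => Fin.lastCases (u i')
          (fun j' => ((-v j') * u i' - u j' * v i') / ((-k j') - k i')) j) i))
    (hV : ∀ a b c, V a b c = (1 / Dn) * Matrix.det (Matrix.of fun i j : Fin (n + 1) =>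
      Fin.lastCases (motive := fun _ => F)
        (Fin.lastCases b (fun j' => ((-v j') * a - u j' * b) / ((-k j') - c)) j)
        (fun i' => Fin.lastCases (v i')
          (fun j' => ((-v j') * u i' - u j' * v i') / ((-k j') - k i')) j) i))
    (hX : ∀ a b c, X a b c = (1 / Dn) * Matrix.det (Matrix.of fun i j : Fin (n + 1) =>
      Fin.lastCases (motive := fun _ => F)
        (Fin.lastCases a (fun j' => u j') j)
        (fun i' => Fin.lastCases ((b * u i' - a * v i') / (c - k i'))
          (fun j' => ((-v j') * u i' - u j' * v i') / ((-k j') - k i')) j) i))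
    (hY : ∀ a b c, Y a b c = (1 / Dn) * Matrix.det (Matrix.of fun i j : Fin (n + 1) =>
      Fin.lastCases (motive := fun _ => F)
        (Fin.lastCases b (fun j' => -v j') j)
        (fun i' => Fin.lastCases ((b * u i' - a * v i') / (c - k i'))
          (fun j' => ((-v j') * u i' - u j' * v i') / ((-k j') - k i')) j) i)) :
    ∀ a b c : F, (∀ j : Fin n, c + k j ≠ 0) →
      X a (-b) (-c) = U a b c ∧ Y a (-b) (-c) = -(V a b c) :=
  symmetric_UX_relations_general n u v k Dn U V X Y hU hV hX hY
end

section
/- Let u_1, v_1, k_1, u, v, k, x_1, y_1, l_1, x, y, l be field elements with l_1 ≠ k_1, l ≠ k_1, l_1 ≠ k, l ≠ k, and y_1 u_1 − x_1 v_1 ≠ 0. Then det of the 2×2 matrix [[(y_1u_1−x_1v_1)/(l_1−k_1), (yu_1−xv_1)/(l−k_1)], [(y_1u−x_1v)/(l_1−k), (yu−xv)/(l−k)]] divided by (y_1u_1−x_1v_1)/(l_1−k_1) equals (Y·U − X·V)/(l−k), where U = [(l_1−k_1)/(y_1u_1−x_1v_1)]·det[[( y_1u_1−x_1v_1)/(l_1−k_1),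 u_1],[(y_1u−x_1v)/(l_1−k), u]], V is the same with last column (v_1, v)ᵀ, X = [(l_1−k_1)/(y_1u_1−x_1v_1)]·det[[(y_1u_1−x_1v_1)/(l_1−k_1), (yu_1−xv_1)/(l−k_1)],[x_1, x]], and Y is the same with last row (y_1, y). -/
/-!
Write `C i j` for the Cauchy-like entries `(yⱼ uᵢ - xⱼ vᵢ) / (lⱼ - kᵢ)`. Dividing the `2 × 2`
determinant by `C 1 1` gives the Schur complement `C 2 2 - C 2 1 C 1 2 / C 1 1`, while `U, V, X, Y`
are the generators after one step of Gaussian elimination: `U = u - t u₁` and `X = x - s x₁` with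
`s = C 1 2 / C 1 1`, `t = C 2 1 / C 1 1`. The entries satisfy the displacement equations
`(lⱼ - kᵢ) C i j = yⱼ uᵢ - xⱼ vᵢ`, and these survive elimination because the three correction terms
carry the factors `l - k₁`, `l₁ - k`, `l₁ - k₁`, whose alternating sum is `l - k`.
-/

open Matrix

theorem inv_mul_det_fin_two_of {K : Type*} [Field K] {a : K} (b c d : K) (ha : a ≠ 0) :
    a⁻¹ * det !![a, b; c, d] = d - c / a * b := by
  rw [det_fin_two_of]
  field_simp

theorem displacement_schur_complement {R : Type*} [CommRing R]
    {u₁ v₁ k₁ u v k x₁ y₁ l₁ x y l c₁₁ c₁₂ c₂₁ c₂₂ s t : R}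
    (h₁₁ : (l₁ - k₁) * c₁₁ = y₁ * u₁ - x₁ * v₁) (h₁₂ : (l - k₁) * c₁₂ = y * u₁ - x * v₁)
    (h₂₁ : (l₁ - k) * c₂₁ = y₁ * u - x₁ * v) (h₂₂ : (l - k) * c₂₂ = y * u - x * v)
    (hs : s * c₁₁ = c₁₂) (ht : t * c₁₁ = c₂₁) :
    (y - s * y₁) * (u - t * u₁) - (x - s * x₁) * (v - t * v₁) = (l - k) * (c₂₂ - t * c₁₂) := by
  linear_combination -h₂₂ + t * h₁₂ + s * h₂₁ - s * t * h₁₁ + s * (l₁ - k) * ht + t * (k - k₁) * hs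

/-- The `n = 1` case of the reproducing determinant theorem, fully explicit. -/
theorem reproducing_determinant_n1 {F : Type*} [Field F]
    (u₁ v₁ k₁ u v k x₁ y₁ l₁ x y l : F)
    (h1 : l₁ ≠ k₁) (h2 : l ≠ k₁) (h3 : l₁ ≠ k) (h4 : l ≠ k)
    (h5 : y₁ * u₁ - x₁ * v₁ ≠ 0)
    (U V X Y : F)
    (hU : U = (l₁ - k₁) / (y₁ * u₁ - x₁ * v₁) *
      Matrix.det !![(y₁ * u₁ - x₁ * v₁) / (l₁ - k₁), u₁;
                    (y₁ * u - x₁ * v) / (l₁ - k), u])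
    (hV : V = (l₁ - k₁) / (y₁ * u₁ - x₁ * v₁) *
      Matrix.det !![(y₁ * u₁ - x₁ * v₁) / (l₁ - k₁), v₁;
                    (y₁ * u - x₁ * v) / (l₁ - k), v])
    (hX : X = (l₁ - k₁) / (y₁ * u₁ - x₁ * v₁) *
      Matrix.det !![(y₁ * u₁ - x₁ * v₁) / (l₁ - k₁), (y * u₁ - x * v₁) / (l - k₁);
                    x₁, x])
    (hY : Y = (l₁ - k₁) / (y₁ * u₁ - x₁ * v₁) *
      Matrix.det !![(y₁ * u₁ - x₁ * v₁) / (l₁ - k₁), (y * u₁ - x * v₁) / (l - k₁);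
                    y₁, y]) :
    Matrix.det !![(y₁ * u₁ - x₁ * v₁) / (l₁ - k₁), (y * u₁ - x * v₁) / (l - k₁);
                  (y₁ * u - x₁ * v) / (l₁ - k), (y * u - x * v) / (l - k)] /
        ((y₁ * u₁ - x₁ * v₁) / (l₁ - k₁)) =
      (Y * U - X * V) / (l - k) := by
  have hC₁₁ : (y₁ * u₁ - x₁ * v₁) / (l₁ - k₁) ≠ 0 := div_ne_zero h5 (sub_ne_zero.2 h1)
  have hweight := inv_div (y₁ * u₁ - x₁ * v₁) (l₁ - k₁)
  rw [← hweight, inv_mul_det_fin_two_of _ _ _ hC₁₁] at hU hV hX hY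
  have hschur := displacement_schur_complement
    (mul_div_cancel₀ _ (sub_ne_zero.2 h1)) (mul_div_cancel₀ _ (sub_ne_zero.2 h2))
    (mul_div_cancel₀ _ (sub_ne_zero.2 h3)) (mul_div_cancel₀ (y * u - x * v) (sub_ne_zero.2 h4))
    (div_mul_cancel₀ _ hC₁₁) (div_mul_cancel₀ _ hC₁₁)
  rw [div_eq_inv_mul, inv_mul_det_fin_two_of _ _ _ hC₁₁, eq_div_iff (sub_ne_zero.2 h4),
    hU, hV, hX, hY]
  linear_combination -hschur
end

section
/- Let K be the (n+1)×(n+1) Vandermonde-type matrix with (i,j) entry k_j^{i−1} over a field, with the k_j pairwise distinct, let A(t) = ∏_{i=1}^{n+1}(t − k_i), and let L be the matrix with (i,j) entry l_j^{i−1}. Then K^{-1}·L = diag(1/A'(k_i)) · [1/(l_j − k_i)]_{i,j} · diag(A(l_j)), provided all l_j − k_i ≠ 0. -/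
open Matrix Polynomial

/-!
Column `j` of `L` lists the values at `l j` of the monomials `X ^ i`, `i ≤ n`. Each of them has
degree at most `n`, so it equals its Lagrange interpolant at the `n + 1` nodes `k`, and the
barycentric form of that interpolant evaluated off the nodes reads
`l j ^ i = A (l j) * ∑ m, (l j - k m)⁻¹ * k m ^ i / A' (k m)`.
This is the `(i, j)` entry of `K * (diag (1 / A' (k m)) * [(l j - k m)⁻¹] * diag (A (l j)))`.
-/

namespace Lagrange

variable {F ι : Type*} [Field F] [DecidableEq ι] {s : Finset ι} {v : ι → F}

theorem eval_eq_eval_nodal_mul_sum_of_degree_lt (hvs : Set.InjOn v s) {p : F[X]}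
    (hp : p.degree < s.card) {x : F} (hx : ∀ i ∈ s, x ≠ v i) :
    p.eval x = (nodal s v).eval x * ∑ i ∈ s, nodalWeight s v i * (x - v i)⁻¹ * p.eval (v i) := by
  conv_lhs => rw [eq_interpolate hvs hp]
  exact eval_interpolate_not_at_node _ hx

end Lagrange

open Lagrange in
theorem Matrix.vandermonde_transpose_mul_cauchy {F : Type*} [Field F] {n : ℕ}
    {k l : Fin n → F} (hk : Function.Injective k) (hlk : ∀ i j, l j ≠ k i) :
    (vandermonde k)ᵀ * (diagonal (nodalWeight Finset.univ k) * of (fun i j => (l j - k i)⁻¹) *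
      diagonal (fun j => (nodal Finset.univ k).eval (l j))) = (vandermonde l)ᵀ := by
  ext i j
  have hdeg : (X ^ (i : ℕ) : F[X]).degree < (Finset.univ : Finset (Fin n)).card := by
    simp
  have hmonomial := eval_eq_eval_nodal_mul_sum_of_degree_lt hk.injOn hdeg (x := l j)
    fun m _ => hlk m j
  simp only [eval_pow, eval_X] at hmonomial
  rw [mul_apply, transpose_apply, vandermonde_apply, hmonomial, Finset.mul_sum]
  simp only [diagonal_mul, mul_diagonal, transpose_apply, vandermonde_apply, of_apply]
  exact Finset.sum_congr rfl fun m _ => by ring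

/-- Key lemma: the inverse of a Vandermonde matrix in the `k`-nodes times a Vandermonde
matrix in the `l`-nodes is a Cauchy matrix conjugated by diagonal matrices of values of
`A(t) = ∏ (t - k_i)` and its derivative. -/
theorem vandermonde_inv_mul_vandermonde {F : Type*} [Field F] (n : ℕ)
    (k l : Fin (n + 1) → F) (hk : Function.Injective k)
    (hlk : ∀ i j, l j ≠ k i)
    (A : Polynomial F) (hA : A = ∏ i : Fin (n + 1), (Polynomial.X - Polynomial.C (k i)))
    (K L : Matrix (Fin (n + 1)) (Fin (n + 1)) F)
    (hK : K = Matrix.of fun (i j : Fin (n+1)) => k j ^ (i : ℕ))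
    (hL : L = Matrix.of fun (i j : Fin (n+1)) => l j ^ (i : ℕ)) :
    K⁻¹ * L =
      Matrix.diagonal (fun i => ((Polynomial.derivative A).eval (k i))⁻¹) *
        (Matrix.of fun i j => (l j - k i)⁻¹) *
        Matrix.diagonal (fun j => A.eval (l j)) := by
  replace hA : A = Lagrange.nodal Finset.univ k := hA
  replace hK : K = (vandermonde k)ᵀ := hK
  replace hL : L = (vandermonde l)ᵀ := hL
  have hweight : (fun i => (A.derivative.eval (k i))⁻¹) = Lagrange.nodalWeight Finset.univ k :=
    funext fun i => by rw [hA, Lagrange.nodalWeight_eq_eval_derivative_nodal (Finset.mem_univ i)]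
  have : Invertible K := K.invertibleOfIsUnitDet <| by
    rw [hK, det_transpose]
    exact (det_vandermonde_ne_zero_iff.mpr hk).isUnit
  rw [inv_mul_eq_iff_eq_mul_of_invertible, hweight, hA, hK, hL]
  exact (vandermonde_transpose_mul_cauchy hk hlk).symm
end

section
/- Let D_u, D_v, D_x, D_y be diagonal (n+1)×(n+1) matrices and K, L invertible (n+1)×(n+1) matrices over a field. Then the (2n+2)×(2n+2) block determinant det [[K·D_u, L·D_x],[K·D_v, L·D_y]] equals det(K)^2 · det(D_u·K^{-1}·L·D_y − D_v·K^{-1}·L·D_x). -/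
/-!
Factoring `diag(K, K)` out on the left reduces the block matrix to
`[[D_u, K⁻¹ L D_x], [D_v, K⁻¹ L D_y]]`, whose left blocks are diagonal and hence commute.
For `[[A, B], [C, D]]` with `A` and `C` commuting, multiplying on the left by `[[1, 0], [-C, A]]`
gives `[[A, B], [0, A D - C B]]`, so `det A · det M = det A · det (A D - C B)`. Replacing `A` by
`A + X` over `R[X]` makes `det A` monic, hence cancellable, and setting `X = 0` gives
`det M = det (A D - C B)` without any invertibility assumption.
-/

open Matrix

namespace Matrix

variable {R : Type*} [CommRing R] {m : Type*} [Fintype m] [DecidableEq m]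

theorem det_mul_det_fromBlocks_of_commute {A B C D : Matrix m m R} (hAC : Commute A C) :
    A.det * (fromBlocks A B C D).det = A.det * (A * D - C * B).det := by
  have hclear : fromBlocks 1 0 (-C) A * fromBlocks A B C D = fromBlocks A B 0 (A * D - C * B) := by
    rw [fromBlocks_multiply, hAC.eq]
    simp only [Matrix.one_mul, Matrix.zero_mul, add_zero, Matrix.neg_mul, neg_add_cancel]
    congr 1
    abel
  have := congrArg det hclear
  rwa [det_mul, det_fromBlocks_zero₁₂, det_fromBlocks_zero₂₁, det_one, one_mul] at this

theorem det_fromBlocks_of_commute {A B C D : Matrix m m R} (hAC : Commute A C) :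
    (fromBlocks A B C D).det = (A * D - C * B).det := by
  let ι : R →+* Polynomial R := Polynomial.C
  let ε : Polynomial R →+* R := Polynomial.evalRingHom 0
  let A' : Matrix m m (Polynomial R) := ι.mapMatrix A + scalar m Polynomial.X
  have hdet : A'.det = (-A).charpoly := by
    rw [charpoly, charmatrix, map_neg, sub_neg_eq_add, add_comm]
  have hcomm : Commute A' (ι.mapMatrix C) :=
    (hAC.map ι.mapMatrix).add_left (scalar_commute _ (Commute.all _) _)
  have generic :=
    det_mul_det_fromBlocks_of_commute (B := ι.mapMatrix B) (D := ι.mapMatrix D) hcomm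
  rw [hdet] at generic
  have hε : ∀ M : Matrix m m R, (M.map ι).map ε = M := fun M => by
    ext
    simp [ι, ε]
  have hεA : A'.map ε = A := by
    ext i j
    rcases eq_or_ne i j with rfl | hij <;> simp [A', ι, ε, *]
  simpa only [RingHom.map_det, RingHom.mapMatrix_apply, fromBlocks_map,
    Matrix.map_sub _ (map_sub ε), Matrix.map_mul, hεA, hε]
    using congrArg ε ((charpoly_monic (-A)).isRegular.left generic)

end Matrix

theorem block_det_reduction_general {F : Type*} [Field F] (n : ℕ)
    (Du Dv Dx Dy : Fin (n + 1) → F)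
    (K L : Matrix (Fin (n + 1)) (Fin (n + 1)) F)
    (hK : IsUnit K.det) :
    (Matrix.fromBlocks (K * Matrix.diagonal Du) (L * Matrix.diagonal Dx)
        (K * Matrix.diagonal Dv) (L * Matrix.diagonal Dy)).det =
      K.det ^ 2 *
        (Matrix.diagonal Du * K⁻¹ * L * Matrix.diagonal Dy -
          Matrix.diagonal Dv * K⁻¹ * L * Matrix.diagonal Dx).det := by
  have hfactor :
      fromBlocks (K * diagonal Du) (L * diagonal Dx) (K * diagonal Dv) (L * diagonal Dy) =
        fromBlocks K 0 0 K *
          fromBlocks (diagonal Du) (K⁻¹ * L * diagonal Dx)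
            (diagonal Dv) (K⁻¹ * L * diagonal Dy) := by
    simp only [fromBlocks_multiply, Matrix.zero_mul, add_zero, zero_add, ← Matrix.mul_assoc,
      mul_nonsing_inv K hK, Matrix.one_mul]
  rw [hfactor, det_mul, det_fromBlocks_zero₁₂,
    det_fromBlocks_of_commute (commute_diagonal Du Dv), sq]
  simp only [Matrix.mul_assoc]

/-- Block determinant reduction: for invertible `K, L` and diagonal `D_u, D_v, D_x, D_y`,
`det [[K·D_u, L·D_x], [K·D_v, L·D_y]] = det(K)^2 · det(D_u K⁻¹ L D_y − D_v K⁻¹ L D_x)`. -/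
theorem block_det_reduction {F : Type*} [Field F] (n : ℕ)
    (Du Dv Dx Dy : Fin (n + 1) → F)
    (K L : Matrix (Fin (n + 1)) (Fin (n + 1)) F)
    (hK : IsUnit K.det) (hL : IsUnit L.det) :
    (Matrix.fromBlocks (K * Matrix.diagonal Du) (L * Matrix.diagonal Dx)
        (K * Matrix.diagonal Dv) (L * Matrix.diagonal Dy)).det =
      K.det ^ 2 *
        (Matrix.diagonal Du * K⁻¹ * L * Matrix.diagonal Dy -
          Matrix.diagonal Dv * K⁻¹ * L * Matrix.diagonal Dx).det :=
  block_det_reduction_general n Du Dv Dx Dy K L hK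
end
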